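/- arXiv:2107.05069 — 2 statements merged into one kernel-verified Lean document; each statement's English description precedes it below -/
import Mathlib

section
/- Every graph-based logic that has an algebraic semantics has a unital matrix semantics; in particular, for such a logic with a unary connective □, the rules x, y, □ⁿx ⊢ □ⁿy are valid for all n ∈ ω. -/
/-- An algebraic signature: a type of operation symbols with arities. -/
structure Sig : Type 1 where
  Op : Type
  ar : Op → ℕ

/-- Formulas (terms) over a signature, with variables indexed by ℕ. -/
inductive Fm (L : Sig) : Type where
  | var : ℕ → Fm L
  | op : (f : L.Op) → (Fin (L.ar f) → Fm L) → Fm L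

/-- An algebra for the signature `L`. -/
structure Alg (L : Sig) : Type 1 where
  carrier : Type
  interp : (f : L.Op) → (Fin (L.ar f) → carrier) → carrier

/-- Evaluation of a formula in an algebra under a valuation of the variables. -/
def Fm.eval {L : Sig} (A : Alg L) (v : ℕ → A.carrier) : Fm L → A.carrier
  | .var n => v n
  | .op f as => A.interp f (fun i => (as i).eval A v)

/-- Substitution (endomorphism of the formula algebra). -/
def Fm.subst {L : Sig} (σ : ℕ → Fm L) : Fm L → Fm L
  | .var n => σ n
  | .op f as => .op f (fun i => (as i).subst σ)

/-- The set of variables occurring in a formula. -/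
def Fm.vars {L : Sig} : Fm L → Set ℕ
  | .var n => {n}
  | .op _ as => ⋃ i, (as i).vars

/-- Substitute the formula `ψ` for the variable `v` in `φ`. -/
def Fm.subst1 {L : Sig} (v : ℕ) (ψ : Fm L) (φ : Fm L) : Fm L :=
  φ.subst (fun n => if n = v then ψ else .var n)

/-- A logic: a substitution-invariant (finitary or not) consequence relation on formulas. -/
structure Logic (L : Sig) : Type where
  deriv : Set (Fm L) → Fm L → Prop
  axm : ∀ Γ φ, φ ∈ Γ → deriv Γ φ
  mono : ∀ Γ Δ φ, Γ ⊆ Δ → deriv Γ φ → deriv Δ φ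
  cut : ∀ Γ Δ φ, deriv Γ φ → (∀ γ ∈ Γ, deriv Δ γ) → deriv Δ φ
  substInv : ∀ (σ : ℕ → Fm L) Γ φ, deriv Γ φ → deriv (Fm.subst σ '' Γ) (φ.subst σ)

/-- A logical matrix: an algebra with a set of designated elements. -/
structure LMatrix (L : Sig) : Type 1 where
  alg : Alg L
  F : Set alg.carrier

/-- The consequence relation induced by a class of matrices. -/
def inducedBy {L : Sig} (M : Set (LMatrix L)) (Γ : Set (Fm L)) (φ : Fm L) : Prop :=
  ∀ m ∈ M, ∀ v : ℕ → m.alg.carrier,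
    (∀ γ ∈ Γ, γ.eval m.alg v ∈ m.F) → φ.eval m.alg v ∈ m.F

/-- `M` is a matrix semantics for the logic `ℒ`. -/
def IsMatrixSemantics {L : Sig} (ℒ : Logic L) (M : Set (LMatrix L)) : Prop :=
  ∀ Γ φ, ℒ.deriv Γ φ ↔ inducedBy M Γ φ

/-- Equational consequence relative to a class of algebras (equations as pairs of formulas). -/
def eqConseq {L : Sig} (K : Set (Alg L)) (Θ : Set (Fm L × Fm L)) (e : Fm L × Fm L) : Prop :=
  ∀ A ∈ K, ∀ v : ℕ → A.carrier,
    (∀ p ∈ Θ, p.1.eval A v = p.2.eval A v) → e.1.eval A v = e.2.eval A v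

/-- `τ(φ)`: the result of substituting `φ` for the variable `x` (= variable 0) in each
equation of `τ`. -/
def tauApp {L : Sig} (τ : Set (Fm L × Fm L)) (φ : Fm L) : Set (Fm L × Fm L) :=
  (fun e => (Fm.subst1 0 φ e.1, Fm.subst1 0 φ e.2)) '' τ

/-- `τ[Γ]`. -/
def tauAppSet {L : Sig} (τ : Set (Fm L × Fm L)) (Γ : Set (Fm L)) : Set (Fm L × Fm L) :=
  ⋃ γ ∈ Γ, tauApp τ γ

/-- `τ` is a set of equations in the single variable `x` (= variable 0). -/
def IsUnivalent {L : Sig} (τ : Set (Fm L × Fm L)) : Prop :=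
  ∀ e ∈ τ, e.1.vars ⊆ ({0} : Set ℕ) ∧ e.2.vars ⊆ ({0} : Set ℕ)

/-- `K` is a `τ`-algebraic semantics for `ℒ`: `Γ ⊢ φ` iff `τ[Γ] ⊨_K τ(φ)`. -/
def IsTauAlgSem {L : Sig} (ℒ : Logic L) (τ : Set (Fm L × Fm L)) (K : Set (Alg L)) : Prop :=
  IsUnivalent τ ∧ ∀ Γ φ, ℒ.deriv Γ φ ↔ ∀ e ∈ tauApp τ φ, eqConseq K (tauAppSet τ Γ) e

/-- `ℒ` has an algebraic semantics (admits an equational completeness theorem). -/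
def HasAlgSem {L : Sig} (ℒ : Logic L) : Prop :=
  ∃ (τ : Set (Fm L × Fm L)) (K : Set (Alg L)), IsTauAlgSem ℒ τ K

/-- `θ` is a congruence of the algebra `A`. -/
def IsCong {L : Sig} (A : Alg L) (θ : A.carrier → A.carrier → Prop) : Prop :=
  Equivalence θ ∧ ∀ (f : L.Op) (as bs : Fin (L.ar f) → A.carrier),
    (∀ i, θ (as i) (bs i)) → θ (A.interp f as) (A.interp f bs)

/-- The congruence of `A` generated by `X` (least congruence containing `X`). -/
def congGen {L : Sig} (A : Alg L) (X : Set (A.carrier × A.carrier))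
    (a c : A.carrier) : Prop :=
  ∀ θ, IsCong A θ → (∀ p ∈ X, θ p.1 p.2) → θ a c

/-- `p` is a unary polynomial function of `A`: `p(a) = φ^A(a, c⃗)` for a formula `φ(x, y⃗)`
and parameters `c⃗` from `A`. -/
def IsUnaryPoly {L : Sig} (A : Alg L) (p : A.carrier → A.carrier) : Prop :=
  ∃ (φ : Fm L) (c : ℕ → A.carrier),
    ∀ a, p a = φ.eval A (fun n => if n = 0 then a else c n)

/-- Compatibility of a relation with a set. -/
def Compatible {L : Sig} (A : Alg L) (θ : A.carrier → A.carrier → Prop)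
    (F : Set A.carrier) : Prop :=
  ∀ a c, θ a c → a ∈ F → c ∈ F

/-- The Leibniz congruence `Ω^A F`: the largest congruence of `A` compatible with `F`
(realized as the union of all congruences compatible with `F`). -/
def leibniz {L : Sig} (A : Alg L) (F : Set A.carrier) (a c : A.carrier) : Prop :=
  ∃ θ, IsCong A θ ∧ Compatible A θ F ∧ θ a c

/-- The formula algebra. -/
def FmAlg (L : Sig) : Alg L :=
  ⟨Fm L, fun f as => Fm.op f as⟩

/-- `ℒ` has no theorems. -/
def LacksTheorems {L : Sig} (ℒ : Logic L) : Prop :=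
  ¬ ∃ φ, ℒ.deriv ∅ φ

/-- `ℒ` is assertional. -/
def Assertional {L : Sig} (ℒ : Logic L) : Prop :=
  ∃ (M : Set (LMatrix L)) (φ : Fm L), IsMatrixSemantics ℒ M ∧ φ.vars ⊆ ({0} : Set ℕ) ∧
    ∀ m ∈ M, ∃ c : m.alg.carrier,
      (∀ a : m.alg.carrier, φ.eval m.alg (fun _ => a) = c) ∧ m.F = {c}

/-- `ℒ` is almost assertional. -/
def AlmostAssertional {L : Sig} (ℒ : Logic L) : Prop :=
  LacksTheorems ℒ ∧
  ∃ (M : Set (LMatrix L)) (φ : Fm L), IsMatrixSemantics ℒ M ∧ φ.vars ⊆ ({0} : Set ℕ) ∧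
    ∀ m ∈ M, m.F.Nonempty → ∃ c : m.alg.carrier,
      (∀ a : m.alg.carrier, φ.eval m.alg (fun _ => a) = c) ∧ m.F = {c}

/-- Two formulas are logically equivalent in `ℒ`. -/
def LogEquiv {L : Sig} (ℒ : Logic L) (ε δ : Fm L) : Prop :=
  ∀ (φ : Fm L) (v : ℕ),
    ℒ.deriv {Fm.subst1 v ε φ} (Fm.subst1 v δ φ) ∧
    ℒ.deriv {Fm.subst1 v δ φ} (Fm.subst1 v ε φ)

/-- A signature is graph-based: all arities are ≤ 1 and there is at most one unary symbol. -/
def GraphBased (L : Sig) : Prop :=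
  (∀ f : L.Op, L.ar f ≤ 1) ∧ ∀ f g : L.Op, L.ar f = 1 → L.ar g = 1 → f = g

/-- Iterated application of a unary connective. -/
def boxIter {L : Sig} (b : L.Op) : ℕ → Fm L → Fm L
  | 0, φ => φ
  | n + 1, φ => Fm.op b (fun _ => boxIter b n φ)

/-!
In a graph-based language a formula in the single variable `x` is either variable-free or
`□ᵏx`, so each equation of `τ` reads `p(x) ≈ q(x)` with `p`, `q` constant or iterates of `□`.
As iterates of `□` commute, a short case analysis shows that `τ(x)`, `τ(y)`, `τ(□ⁿx)` entail
`τ(□ⁿy)`, which is the rule `x, y, □ⁿx ⊢ □ⁿy`. For the unital semantics, reduce the Lindenbaum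
matrix of each theory `Γ` by the relation "for every `n`, `Γ ⊢ □ⁿα` iff `Γ ⊢ □ⁿβ`": in a
graph-based language it is a congruence compatible with the theory, and the rule makes it
identify all theorems of `Γ`.
-/

namespace Fm

variable {L : Sig}

theorem eval_subst (A : Alg L) (v : ℕ → A.carrier) (σ : ℕ → Fm L) :
    ∀ φ : Fm L, (φ.subst σ).eval A v = φ.eval A (fun n => (σ n).eval A v)
  | .var _ => rfl
  | .op f as => congrArg (A.interp f) (funext fun i => eval_subst A v σ (as i))

theorem eval_congr (A : Alg L) {u w : ℕ → A.carrier} :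
    ∀ φ : Fm L, (∀ n ∈ φ.vars, u n = w n) → φ.eval A u = φ.eval A w
  | .var n, h => h n rfl
  | .op f as, h => congrArg (A.interp f) <| funext fun i =>
      eval_congr A (as i) fun n hn => h n (Set.mem_iUnion.2 ⟨i, hn⟩)

theorem eval_fmAlg (σ : ℕ → Fm L) : ∀ φ : Fm L, φ.eval (FmAlg L) σ = φ.subst σ
  | .var _ => rfl
  | .op f as => congrArg (Fm.op f) (funext fun i => eval_fmAlg σ (as i))

theorem subst_var : ∀ φ : Fm L, φ.subst Fm.var = φ
  | .var _ => rfl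
  | .op f as => congrArg (Fm.op f) (funext fun i => subst_var (as i))

theorem eval_subst1_zero (A : Alg L) (v : ℕ → A.carrier) (γ : Fm L) {s : Fm L}
    (hs : s.vars ⊆ {0}) :
    (subst1 0 γ s).eval A v = s.eval A (fun _ => γ.eval A v) := by
  rw [subst1, eval_subst]
  refine eval_congr A s fun n hn => ?_
  rw [Set.eq_of_mem_singleton (hs hn), if_pos rfl]

end Fm

def Alg.unaryOp {L : Sig} (A : Alg L) (b : L.Op) : A.carrier → A.carrier :=
  fun x => A.interp b fun _ => x

section BoxIter

variable {L : Sig} (b : L.Op)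

theorem boxIter_succ' (n : ℕ) (φ : Fm L) :
    boxIter b (n + 1) φ = boxIter b n (boxIter b 1 φ) := by
  induction n with
  | zero => rfl
  | succ n ih => exact congrArg (Fm.op b) (funext fun _ => ih)

theorem Fm.subst_boxIter (σ : ℕ → Fm L) (n : ℕ) (φ : Fm L) :
    (boxIter b n φ).subst σ = boxIter b n (φ.subst σ) := by
  induction n with
  | zero => rfl
  | succ n ih => exact congrArg (Fm.op b) (funext fun _ => ih)

theorem Fm.eval_boxIter (A : Alg L) (v : ℕ → A.carrier) (n : ℕ) (φ : Fm L) :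
    (boxIter b n φ).eval A v = (A.unaryOp b)^[n] (φ.eval A v) := by
  induction n with
  | zero => rfl
  | succ n ih =>
    rw [Function.iterate_succ_apply', ← ih]
    rfl

theorem Fm.op_eq_boxIter_one {f : L.Op} (hf : L.ar f = 1) (as : Fin (L.ar f) → Fm L) :
    Fm.op f as = boxIter f 1 (as ⟨0, by omega⟩) :=
  congrArg (Fm.op f) <| funext fun i => congrArg as <| Fin.ext (by omega)

end BoxIter

namespace GraphBased

variable {L : Sig}

theorem ar_eq_zero_or_one (hL : GraphBased L) (f : L.Op) : L.ar f = 0 ∨ L.ar f = 1 := by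
  have := hL.1 f
  omega

theorem vars_eq_empty_or_eq_boxIter (hL : GraphBased L) {b : L.Op} (hb : L.ar b = 1) {φ : Fm L}
    (hφ : φ.vars ⊆ {0}) : φ.vars = ∅ ∨ ∃ k, φ = boxIter b k (Fm.var 0) := by
  induction φ with
  | var n => exact Or.inr ⟨0, by rw [Set.eq_of_mem_singleton (hφ rfl)]; rfl⟩
  | op f as ih =>
    rcases hL.ar_eq_zero_or_one f with hf | hf
    · left
      have : IsEmpty (Fin (L.ar f)) := by rw [hf]; infer_instance
      exact Set.iUnion_of_empty _
    · obtain rfl := hL.2 f b hf hb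
      rw [Fm.op_eq_boxIter_one hf] at hφ ⊢
      have : Nonempty (Fin (L.ar f)) := ⟨⟨0, by omega⟩⟩
      have hvars : (boxIter f 1 (as ⟨0, by omega⟩)).vars = (as ⟨0, by omega⟩).vars :=
        Set.iUnion_const _
      rw [hvars] at hφ
      rcases ih _ hφ with h | ⟨k, hk⟩
      · exact Or.inl (hvars.trans h)
      · exact Or.inr ⟨k + 1, by rw [hk]; rfl⟩

end GraphBased

def IsConstOrIterate {X : Type*} (B : X → X) (p : X → X) : Prop :=
  (∀ x y, p x = p y) ∨ ∃ k, p = B^[k]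

section IsConstOrIterate

variable {X : Type*} {B : X → X} {a c : X} {n : ℕ}

theorem const_eq_iterate_apply_iterate {K : X} (l : ℕ) (ha : K = B^[l] a) (hc : K = B^[l] c)
    (hna : K = B^[l] (B^[n] a)) : K = B^[l] (B^[n] c) :=
  calc K = B^[l] (B^[n] a) := hna
    _ = B^[n] (B^[l] a) := (Function.Commute.iterate_iterate_self B l n).eq a
    _ = B^[n] (B^[l] c) := by rw [← ha, ← hc]
    _ = B^[l] (B^[n] c) := ((Function.Commute.iterate_iterate_self B l n).eq c).symm

/-- Semantic form of the rule `x, y, □ⁿx ⊢ □ⁿy` for an equation `p(x) ≈ q(x)`. -/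
theorem IsConstOrIterate.apply_iterate_eq {p q : X → X} (hp : IsConstOrIterate B p)
    (hq : IsConstOrIterate B q) (ha : p a = q a) (hc : p c = q c)
    (hna : p (B^[n] a) = q (B^[n] a)) : p (B^[n] c) = q (B^[n] c) := by
  rcases hp with hp | ⟨k, rfl⟩ <;> rcases hq with hq | ⟨l, rfl⟩
  · rw [hp _ a, ha, hq a]
  · rw [hp _ a]
    exact const_eq_iterate_apply_iterate l ha ((hp a c).trans hc) ((hp a _).trans hna)
  · rw [hq _ a]
    exact (const_eq_iterate_apply_iterate k ha.symm ((hq a c).trans hc.symm)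
      ((hq a _).trans hna.symm)).symm
  · calc B^[k] (B^[n] c) = B^[n] (B^[k] c) := (Function.Commute.iterate_iterate_self B k n).eq c
      _ = B^[n] (B^[l] c) := by rw [hc]
      _ = B^[l] (B^[n] c) := ((Function.Commute.iterate_iterate_self B l n).eq c).symm

end IsConstOrIterate

theorem GraphBased.isConstOrIterate_eval {L : Sig} (hL : GraphBased L) (A : Alg L) {b : L.Op}
    (hb : L.ar b = 1) {s : Fm L} (hs : s.vars ⊆ {0}) :
    IsConstOrIterate (A.unaryOp b) fun a => s.eval A fun _ => a := by
  rcases hL.vars_eq_empty_or_eq_boxIter hb hs with h | ⟨k, rfl⟩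
  · exact Or.inl fun x y => Fm.eval_congr A s fun n hn => by simp [h] at hn
  · exact Or.inr ⟨k, funext fun a => Fm.eval_boxIter b A _ k _⟩

theorem GraphBased.deriv_boxIter_rule {L : Sig} (hL : GraphBased L) {ℒ : Logic L}
    (h : HasAlgSem ℒ) {b : L.Op} (hb : L.ar b = 1) (n : ℕ) :
    ℒ.deriv {Fm.var 0, Fm.var 1, boxIter b n (Fm.var 0)} (boxIter b n (Fm.var 1)) := by
  obtain ⟨τ, K, hτ, hsem⟩ := h
  rw [hsem]
  rintro _ ⟨⟨s, t⟩, hst, rfl⟩ A hA v hΓ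
  obtain ⟨hs, ht⟩ : s.vars ⊆ {0} ∧ t.vars ⊆ {0} := hτ _ hst
  have hτγ : ∀ γ ∈ ({Fm.var 0, Fm.var 1, boxIter b n (Fm.var 0)} : Set (Fm L)),
      s.eval A (fun _ => γ.eval A v) = t.eval A (fun _ => γ.eval A v) := by
    intro γ hγ
    have := hΓ _ (Set.mem_biUnion hγ ⟨(s, t), hst, rfl⟩)
    rwa [Fm.eval_subst1_zero A v γ hs, Fm.eval_subst1_zero A v γ ht] at this
  show (Fm.subst1 0 _ s).eval A v = (Fm.subst1 0 _ t).eval A v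
  rw [Fm.eval_subst1_zero A v _ hs, Fm.eval_subst1_zero A v _ ht, Fm.eval_boxIter]
  have hna := hτγ (boxIter b n (Fm.var 0)) (by simp)
  rw [Fm.eval_boxIter] at hna
  exact (hL.isConstOrIterate_eval A hb hs).apply_iterate_eq (hL.isConstOrIterate_eval A hb ht)
    (hτγ (Fm.var 0) (by simp)) (hτγ (Fm.var 1) (by simp)) hna

namespace IsCong

variable {L : Sig} {A : Alg L} {θ : A.carrier → A.carrier → Prop}

def setoid (hθ : IsCong A θ) : Setoid A.carrier := ⟨θ, hθ.1⟩

noncomputable def quotAlg (hθ : IsCong A θ) : Alg L where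
  carrier := Quotient hθ.setoid
  interp f qs := Quotient.mk _ (A.interp f fun i => (qs i).out)

theorem quotAlg_interp_mk (hθ : IsCong A θ) (f : L.Op) (as : Fin (L.ar f) → A.carrier) :
    hθ.quotAlg.interp f (fun i => Quotient.mk hθ.setoid (as i)) =
      Quotient.mk hθ.setoid (A.interp f as) :=
  Quotient.sound (hθ.2 f _ _ fun i => Quotient.mk_out (s := hθ.setoid) (as i))

theorem eval_quotAlg (hθ : IsCong A θ) (v : ℕ → A.carrier) :
    ∀ φ : Fm L, φ.eval hθ.quotAlg (fun n => Quotient.mk hθ.setoid (v n)) =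
      Quotient.mk hθ.setoid (φ.eval A v)
  | .var _ => rfl
  | .op f as => by
    show hθ.quotAlg.interp f (fun i => (as i).eval _ _) = _
    rw [funext fun i => eval_quotAlg hθ v (as i)]
    exact quotAlg_interp_mk hθ f _

end IsCong

section Lindenbaum

variable {L : Sig} (ℒ : Logic L) {θ : Fm L → Fm L → Prop}

noncomputable def lindenbaumMatrix (Γ : Set (Fm L)) (hθ : IsCong (FmAlg L) θ) : LMatrix L where
  alg := hθ.quotAlg
  F := Quotient.mk hθ.setoid '' {φ | ℒ.deriv Γ φ}

variable {ℒ}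

theorem mk_mem_lindenbaumMatrix {Γ : Set (Fm L)} (hθ : IsCong (FmAlg L) θ)
    (hcomp : Compatible (FmAlg L) θ {φ | ℒ.deriv Γ φ}) (φ : Fm L) :
    Quotient.mk hθ.setoid φ ∈ (lindenbaumMatrix ℒ Γ hθ).F ↔ ℒ.deriv Γ φ :=
  ⟨fun ⟨ψ, hψ, h⟩ => hcomp ψ φ (Quotient.exact h) hψ, fun h => ⟨φ, h, rfl⟩⟩

theorem eval_lindenbaumMatrix {Γ : Set (Fm L)} (hθ : IsCong (FmAlg L) θ) (σ : ℕ → Fm L)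
    (φ : Fm L) :
    φ.eval (lindenbaumMatrix ℒ Γ hθ).alg (fun n => Quotient.mk hθ.setoid (σ n)) =
      Quotient.mk hθ.setoid (φ.subst σ) :=
  (hθ.eval_quotAlg σ φ).trans (congrArg _ (Fm.eval_fmAlg σ φ))

theorem isMatrixSemantics_lindenbaumMatrix {θ : Set (Fm L) → Fm L → Fm L → Prop}
    (hθ : ∀ Γ, IsCong (FmAlg L) (θ Γ))
    (hcomp : ∀ Γ, Compatible (FmAlg L) (θ Γ) {φ | ℒ.deriv Γ φ}) :
    IsMatrixSemantics ℒ (Set.range fun Γ => lindenbaumMatrix ℒ Γ (hθ Γ)) := by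
  intro Δ φ
  constructor
  · rintro hφ _ ⟨Γ, rfl⟩ v hv
    obtain ⟨σ, rfl⟩ : ∃ σ : ℕ → Fm L, v = fun n => Quotient.mk (hθ Γ).setoid (σ n) :=
      ⟨fun n => (v n).out, funext fun n => (Quotient.out_eq (v n)).symm⟩
    simp only [eval_lindenbaumMatrix] at hv ⊢
    refine (mk_mem_lindenbaumMatrix (hθ Γ) (hcomp Γ) _).mpr <| ℒ.cut _ _ _ (ℒ.substInv σ Δ φ hφ) ?_
    rintro _ ⟨γ, hγ, rfl⟩
    exact (mk_mem_lindenbaumMatrix (hθ Γ) (hcomp Γ) _).mp (hv γ hγ)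
  · intro h
    have := h _ ⟨Δ, rfl⟩ (fun n => Quotient.mk (hθ Δ).setoid (Fm.var n)) fun γ hγ => by
      rw [eval_lindenbaumMatrix, Fm.subst_var]
      exact (mk_mem_lindenbaumMatrix (hθ Δ) (hcomp Δ) γ).mpr (ℒ.axm _ _ hγ)
    rw [eval_lindenbaumMatrix, Fm.subst_var] at this
    exact (mk_mem_lindenbaumMatrix (hθ Δ) (hcomp Δ) φ).mp this

end Lindenbaum

theorem Logic.deriv_boxIter_of_rule {L : Sig} (ℒ : Logic L) {b : L.Op} {n : ℕ}
    (hr : ℒ.deriv {Fm.var 0, Fm.var 1, boxIter b n (Fm.var 0)} (boxIter b n (Fm.var 1)))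
    {Γ : Set (Fm L)} {a c : Fm L} (ha : ℒ.deriv Γ a) (hc : ℒ.deriv Γ c)
    (hna : ℒ.deriv Γ (boxIter b n a)) : ℒ.deriv Γ (boxIter b n c) := by
  have := ℒ.substInv (fun m => if m = 0 then a else c) _ _ hr
  simp only [Set.image_insert_eq, Set.image_singleton, Fm.subst_boxIter, Fm.subst,
    if_pos, one_ne_zero, if_false] at this
  refine ℒ.cut _ _ _ this ?_
  simp only [Set.mem_insert_iff, Set.mem_singleton_iff, forall_eq_or_imp, forall_eq]
  exact ⟨ha, hc, hna⟩

def boxEquiv {L : Sig} (ℒ : Logic L) (Γ : Set (Fm L)) (α β : Fm L) : Prop :=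
  (ℒ.deriv Γ α ↔ ℒ.deriv Γ β) ∧
    ∀ f : L.Op, L.ar f = 1 → ∀ n, (ℒ.deriv Γ (boxIter f n α) ↔ ℒ.deriv Γ (boxIter f n β))

section boxEquiv

variable {L : Sig} {ℒ : Logic L} {Γ : Set (Fm L)}

theorem compatible_boxEquiv : Compatible (FmAlg L) (boxEquiv ℒ Γ) {φ | ℒ.deriv Γ φ} :=
  fun _ _ h => h.1.mp

theorem GraphBased.isCong_boxEquiv (hL : GraphBased L) : IsCong (FmAlg L) (boxEquiv ℒ Γ) := by
  refine ⟨⟨fun _ => ⟨Iff.rfl, fun _ _ _ => Iff.rfl⟩,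
    fun h => ⟨h.1.symm, fun f hf n => (h.2 f hf n).symm⟩,
    fun h h' => ⟨h.1.trans h'.1, fun f hf n => (h.2 f hf n).trans (h'.2 f hf n)⟩⟩,
    fun f (as bs : Fin (L.ar f) → Fm L) hab => ?_⟩
  show boxEquiv ℒ Γ (Fm.op f as) (Fm.op f bs)
  rcases hL.ar_eq_zero_or_one f with hf | hf
  · have : IsEmpty (Fin (L.ar f)) := by rw [hf]; infer_instance
    rw [Subsingleton.elim as bs]
    exact ⟨Iff.rfl, fun _ _ _ => Iff.rfl⟩
  · rw [Fm.op_eq_boxIter_one hf as, Fm.op_eq_boxIter_one hf bs]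
    have h := (hab ⟨0, by omega⟩).2 f hf
    refine ⟨h 1, fun g hg n => ?_⟩
    obtain rfl := hL.2 g f hg hf
    rw [← boxIter_succ', ← boxIter_succ']
    exact h (n + 1)

theorem boxEquiv_of_deriv
    (hrule : ∀ b : L.Op, L.ar b = 1 → ∀ n : ℕ,
      ℒ.deriv {Fm.var 0, Fm.var 1, boxIter b n (Fm.var 0)} (boxIter b n (Fm.var 1)))
    {a c : Fm L} (ha : ℒ.deriv Γ a) (hc : ℒ.deriv Γ c) : boxEquiv ℒ Γ a c :=
  ⟨iff_of_true ha hc, fun b hb n =>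
    ⟨ℒ.deriv_boxIter_of_rule (hrule b hb n) ha hc, ℒ.deriv_boxIter_of_rule (hrule b hb n) hc ha⟩⟩

end boxEquiv

/-- A graph-based logic with an algebraic semantics has a unital matrix semantics; in
particular, for a unary connective `□` the rules `x, y, □ⁿx ⊢ □ⁿy` are valid. -/
theorem graph_based_alg_sem_unital {L : Sig} (hL : GraphBased L) (ℒ : Logic L)
    (h : HasAlgSem ℒ) :
    (∃ M : Set (LMatrix L), (∀ m ∈ M, m.F.Subsingleton) ∧ IsMatrixSemantics ℒ M) ∧
    ∀ b : L.Op, L.ar b = 1 → ∀ n : ℕ,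
      ℒ.deriv {Fm.var 0, Fm.var 1, boxIter b n (Fm.var 0)}
        (boxIter b n (Fm.var 1)) := by
  have hrule := fun b (hb : L.ar b = 1) n => hL.deriv_boxIter_rule h hb n
  refine ⟨⟨Set.range fun Γ => lindenbaumMatrix ℒ Γ hL.isCong_boxEquiv, ?_,
    isMatrixSemantics_lindenbaumMatrix _ fun _ => compatible_boxEquiv⟩, hrule⟩
  rintro _ ⟨Γ, rfl⟩ _ ⟨a, ha, rfl⟩ _ ⟨c, hc, rfl⟩
  exact Quotient.sound (boxEquiv_of_deriv hrule ha hc)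
end

section
/- Let ⊢ be a logic whose language is not graph-based (i.e., it has either two distinct unary connectives or a connective of arity ≥ 2). If there are two distinct logically equivalent formulas φ and ψ with Var(φ) ∪ Var(ψ) = {x}, then ⊢ has an algebraic semantics. -/
/-- The signature is not graph-based: it has two distinct unary connectives or a
connective of arity ≥ 2. -/
def NotGraphBased (L : Sig) : Prop :=
  (∃ f g : L.Op, f ≠ g ∧ L.ar f = 1 ∧ L.ar g = 1) ∨ ∃ f : L.Op, 2 ≤ L.ar f

/-!
Non-graph-basedness yields unary term operations `D u = h(u, …, u)` and
`E u = g(u, D u, …, D u)` with `D u ≠ E v` for all `u`, `v`. With `m = |φ| + |ψ|` and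
`r̂(x) = E(D^{2m} x)`, the translation is the single equation `A(x) ≈ B(x)`, where
`A(x) = E(D^m φ(r̂ x))` and `B(x) = E(D^m ψ(r̂ x))`; the two sides are logically equivalent
because `φ` and `ψ` are. The class `K` consists of the algebras validating the translation of
every consequence of `⊢`, so soundness is built in. For completeness, given `Γ`, rewrite `B(a)`
to `A(a)` whenever `Γ ⊢ a`. The `D`-towers guarantee that no instance of `B` overlaps another
one or an instance of `A`, so in the formula algebra whose operations are followed by one root
rewriting step, `A(d)` and `B(d)` take the same value under `v` exactly when `Γ ⊢ d[v]`.
Structurality puts this algebra in `K`, and the identity valuation refutes `τ[Γ] ⊨ τ(γ)`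
whenever `Γ ⊬ γ`.
-/

namespace Fm

variable {L : Sig}

def size : Fm L → ℕ
  | .var _ => 1
  | .op _ as => 1 + ∑ i, (as i).size

lemma size_pos (t : Fm L) : 0 < t.size := by
  cases t <;> simp [size]

lemma size_lt_size_op {f : L.Op} (as : Fin (L.ar f) → Fm L) (i : Fin (L.ar f)) :
    (as i).size < (op f as).size := by
  have := Finset.single_le_sum (f := fun i => (as i).size) (fun _ _ => Nat.zero_le _)
    (Finset.mem_univ i)
  simp only [size]
  omega

lemma eq_of_op_eq_op {f : L.Op} {as bs : Fin (L.ar f) → Fm L} (h : op f as = op f bs) :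
    as = bs :=
  eq_of_heq (op.inj h).2

lemma vars_finite (t : Fm L) : t.vars.Finite := by
  induction t with
  | var n => exact Set.finite_singleton n
  | op f as ih => exact Set.finite_iUnion ih

lemma vars_subset_vars_op {f : L.Op} (as : Fin (L.ar f) → Fm L) (i : Fin (L.ar f)) :
    (as i).vars ⊆ (op f as).vars :=
  Set.subset_iUnion (fun i => (as i).vars) i

lemma subst_id (t : Fm L) : t.subst var = t := by
  induction t with
  | var n => rfl
  | op f as ih => simp only [subst, ih]

lemma subst_subst (σ τ : ℕ → Fm L) (t : Fm L) :
    (t.subst σ).subst τ = t.subst fun n => (σ n).subst τ := by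
  induction t with
  | var n => rfl
  | op f as ih => simp only [subst, ih]

lemma subst_congr {σ τ : ℕ → Fm L} {t : Fm L} (h : ∀ n ∈ t.vars, σ n = τ n) :
    t.subst σ = t.subst τ := by
  induction t with
  | var n => exact h n rfl
  | op f as ih =>
    simp only [subst]
    congr 1
    funext i
    exact ih i fun n hn => h n (vars_subset_vars_op as i hn)

lemma mem_vars_subst {σ : ℕ → Fm L} {t : Fm L} {n : ℕ} :
    n ∈ (t.subst σ).vars ↔ ∃ k ∈ t.vars, n ∈ (σ k).vars := by
  induction t with
  | var k => simp [subst, vars]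
  | op f as ih => simp only [subst, vars, Set.mem_iUnion, ih]; tauto

@[simp]
lemma subst1_var_self (v : ℕ) (u : Fm L) : subst1 v u (var v) = u := by
  simp [subst1, subst]

lemma subst1_var_of_ne {v n : ℕ} (h : n ≠ v) (u : Fm L) : subst1 v u (var n) = var n := by
  simp [subst1, subst, h]

lemma subst1_op (v : ℕ) (u : Fm L) (f : L.Op) (as : Fin (L.ar f) → Fm L) :
    subst1 v u (op f as) = op f fun i => subst1 v u (as i) :=
  rfl

lemma subst1_of_notMem {v : ℕ} {t : Fm L} (h : v ∉ t.vars) (u : Fm L) : subst1 v u t = t := by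
  conv_rhs => rw [← subst_id t]
  exact subst_congr fun n hn => if_neg fun (hnv : n = v) => h (hnv ▸ hn)

lemma subst_subst1 {t : Fm L} (h : t.vars ⊆ {0}) (u : Fm L) (σ : ℕ → Fm L) :
    (subst1 0 u t).subst σ = subst1 0 (u.subst σ) t := by
  simp only [subst1, subst_subst]
  refine subst_congr fun n hn => ?_
  obtain rfl : n = 0 := h hn
  simp

lemma vars_subst1_subset {t : Fm L} (h : t.vars ⊆ {0}) (u : Fm L) :
    (subst1 0 u t).vars ⊆ u.vars := by
  intro n hn
  obtain ⟨k, hk, hn⟩ := mem_vars_subst.1 hn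
  obtain rfl : k = 0 := h hk
  simpa using hn

lemma subst1_injective {t : Fm L} (h : 0 ∈ t.vars) :
    Function.Injective fun u : Fm L => subst1 0 u t := by
  intro a b hab
  induction t with
  | var n =>
    obtain rfl : 0 = n := h
    simpa using hab
  | op f as ih =>
    obtain ⟨i, hi⟩ := Set.mem_iUnion.1 h
    exact ih i hi (congrFun (eq_of_op_eq_op hab) i)

lemma exists_size_lt_of_subst1_eq_op {c ρ : Fm L} {f : L.Op} {as : Fin (L.ar f) → Fm L}
    (h : subst1 0 ρ c = op f as) (hc : c ≠ var 0) (i : Fin (L.ar f)) :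
    ∃ c' : Fm L, c'.size < c.size ∧ subst1 0 ρ c' = as i := by
  cases c with
  | var n =>
    rw [subst1_var_of_ne (by rintro rfl; exact hc rfl)] at h
    cases h
  | op f' cs =>
    obtain ⟨rfl, hcs⟩ := op.inj h
    exact ⟨cs i, size_lt_size_op cs i, congrFun (eq_of_heq hcs) i⟩

end Fm

namespace Logic

variable {L : Sig} (ℒ : Logic L)

lemma deriv_of_deriv_singleton {Γ : Set (Fm L)} {a b : Fm L} (hab : ℒ.deriv {a} b)
    (ha : ℒ.deriv Γ a) : ℒ.deriv Γ b :=
  ℒ.cut _ _ _ hab fun _ hγ => (Set.mem_singleton_iff.1 hγ) ▸ ha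

lemma deriv_subst_of_deriv {Δ : Set (Fm L)} {δ : Fm L} (h : ℒ.deriv Δ δ) {Γ : Set (Fm L)}
    {σ : ℕ → Fm L} (hΔ : ∀ d ∈ Δ, ℒ.deriv Γ (d.subst σ)) :
    ℒ.deriv Γ (δ.subst σ) :=
  ℒ.cut _ _ _ (ℒ.substInv σ Δ δ h) (by rintro _ ⟨d, hd, rfl⟩; exact hΔ d hd)

lemma deriv_subst1_subst1_subst {ε δ : Fm L}
    (hεδ : ∀ χ v, ℒ.deriv {Fm.subst1 v ε χ} (Fm.subst1 v δ χ))
    (σ : ℕ → Fm L) (C : Fm L) (w : ℕ) (χ : Fm L) (v : ℕ) :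
    ℒ.deriv {Fm.subst1 v (Fm.subst1 w (ε.subst σ) C) χ}
      (Fm.subst1 v (Fm.subst1 w (δ.subst σ) C) χ) := by
  obtain ⟨M, hM⟩ := ((Fm.vars_finite ε).union (Fm.vars_finite δ)).bddAbove
  -- Move the variables of `χ` and `C` above `M + 1`, put the hole `M + 1` in place of `w`,
  -- and undo the shift afterwards, while `σ` acts on the variables of `ε` and `δ`.
  let χ' := χ.subst fun n => if n = v then
    C.subst (fun k => if k = w then .var (M + 1) else .var (M + 2 + k)) else .var (M + 2 + n)
  let back : ℕ → Fm L := fun k => if k ≤ M then σ k else .var (k - (M + 2))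
  have key : ∀ θ : Fm L, θ.vars ⊆ ε.vars ∪ δ.vars →
      (Fm.subst1 (M + 1) θ χ').subst back = Fm.subst1 v (Fm.subst1 w (θ.subst σ) C) χ := by
    intro θ hθ
    have hθσ : θ.subst back = θ.subst σ :=
      Fm.subst_congr fun n hn => if_pos (hM (hθ hn))
    simp only [χ', Fm.subst1, Fm.subst_subst]
    congr 1
    funext n
    split_ifs with hnv
    · simp only [Fm.subst_subst]
      congr 1
      funext k
      split_ifs
      · simp [Fm.subst, hθσ]
      · simp [Fm.subst, back, show M + 2 + k ≠ M + 1 by omega, show ¬M + 2 + k ≤ M by omega]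
    · simp [Fm.subst, back, show M + 2 + n ≠ M + 1 by omega, show ¬M + 2 + n ≤ M by omega]
  have h := ℒ.substInv back _ _ (hεδ χ' (M + 1))
  rwa [Set.image_singleton, key ε Set.subset_union_left, key δ Set.subset_union_right] at h

end Logic

namespace LogEquiv

variable {L : Sig} {ℒ : Logic L} {a b c : Fm L}

lemma refl (ℒ : Logic L) (a : Fm L) : LogEquiv ℒ a a :=
  fun _ _ => ⟨ℒ.axm _ _ rfl, ℒ.axm _ _ rfl⟩

lemma symm (h : LogEquiv ℒ a b) : LogEquiv ℒ b a :=
  fun χ v => (h χ v).symm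

lemma trans (hab : LogEquiv ℒ a b) (hbc : LogEquiv ℒ b c) : LogEquiv ℒ a c :=
  fun χ v => ⟨ℒ.deriv_of_deriv_singleton (hbc χ v).1 (hab χ v).1,
    ℒ.deriv_of_deriv_singleton (hab χ v).2 (hbc χ v).2⟩

lemma deriv_iff (h : LogEquiv ℒ a b) {Γ : Set (Fm L)} : ℒ.deriv Γ a ↔ ℒ.deriv Γ b := by
  have hab := h (.var 0) 0
  simp only [Fm.subst1_var_self] at hab
  exact ⟨ℒ.deriv_of_deriv_singleton hab.1, ℒ.deriv_of_deriv_singleton hab.2⟩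

lemma subst1_subst (h : LogEquiv ℒ a b) (σ : ℕ → Fm L) (C : Fm L) (w : ℕ) :
    LogEquiv ℒ (Fm.subst1 w (a.subst σ) C) (Fm.subst1 w (b.subst σ) C) :=
  fun χ v => ⟨ℒ.deriv_subst1_subst1_subst (fun χ v => (h χ v).1) σ C w χ v,
    ℒ.deriv_subst1_subst1_subst (fun χ v => (h χ v).2) σ C w χ v⟩

lemma op_update {f : L.Op} {as : Fin (L.ar f) → Fm L} {i : Fin (L.ar f)}
    (h : LogEquiv ℒ (as i) b) : LogEquiv ℒ (.op f as) (.op f (Function.update as i b)) := by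
  classical
  obtain ⟨w, hw⟩ := (Fm.vars_finite (.op f as)).exists_notMem
  have key : ∀ θ, Fm.subst1 w θ (.op f (Function.update as i (.var w))) =
      .op f (Function.update as i θ) := by
    intro θ
    rw [Fm.subst1_op]
    congr 1
    funext j
    rcases eq_or_ne j i with rfl | hj
    · simp
    · simp only [Function.update_of_ne hj]
      exact Fm.subst1_of_notMem (fun hw' => hw (Fm.vars_subset_vars_op as j hw')) θ
  have := h.subst1_subst Fm.var (.op f (Function.update as i (.var w))) w
  rwa [Fm.subst_id, Fm.subst_id, key, key, Function.update_eq_self] at this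

lemma op {f : L.Op} {as bs : Fin (L.ar f) → Fm L} (h : ∀ i, LogEquiv ℒ (as i) (bs i)) :
    LogEquiv ℒ (.op f as) (.op f bs) := by
  classical
  suffices ∀ s : Finset (Fin (L.ar f)),
      LogEquiv ℒ (.op f as) (.op f fun i => if i ∈ s then bs i else as i) by
    simpa using this Finset.univ
  intro s
  induction s using Finset.induction_on with
  | empty => simpa using refl ℒ _
  | insert j s hj ih =>
    refine ih.trans ?_
    convert op_update (as := fun i => if i ∈ s then bs i else as i) (i := j) (b := bs j)
      (by simpa [hj] using h j) using 2
    funext i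
    rcases eq_or_ne i j with rfl | hij <;> simp_all

end LogEquiv

section AlgebraicSemantics

variable {L : Sig}

def IsTauSound (ℒ : Logic L) (τ : Set (Fm L × Fm L)) (𝔄 : Alg L) : Prop :=
  ∀ Γ φ, ℒ.deriv Γ φ → ∀ e ∈ tauApp τ φ, eqConseq {𝔄} (tauAppSet τ Γ) e

theorem hasAlgSem_of_exists_countermodel {ℒ : Logic L} {τ : Set (Fm L × Fm L)}
    (hτ : IsUnivalent τ)
    (h : ∀ Γ γ, ¬ ℒ.deriv Γ γ → ∃ 𝔄, IsTauSound ℒ τ 𝔄 ∧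
      ¬ ∀ e ∈ tauApp τ γ, eqConseq {𝔄} (tauAppSet τ Γ) e) :
    HasAlgSem ℒ := by
  refine ⟨τ, {𝔄 | IsTauSound ℒ τ 𝔄}, hτ, fun Γ γ => ⟨?_, fun hK => ?_⟩⟩
  · rintro hd e he 𝔄 h𝔄
    exact h𝔄 Γ γ hd e he 𝔄 rfl
  · by_contra hd
    obtain ⟨𝔄, h𝔄, hfail⟩ := h Γ γ hd
    exact hfail fun e he 𝔄' h𝔄' => (Set.mem_singleton_iff.1 h𝔄') ▸ hK e he 𝔄 h𝔄

end AlgebraicSemantics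

abbrev rewriteAlg {L : Sig} (R : Fm L → Fm L) : Alg L :=
  ⟨Fm L, fun f as => R (.op f as)⟩

/-- `distinct` is what makes the terms `D u = h(u, …, u)` and `E v = g(v, D v, …, D v)` defined
below always different. -/
structure ContextPair (L : Sig) where
  g : L.Op
  h : L.Op
  ar_g_pos : 0 < L.ar g
  ar_h_pos : 0 < L.ar h
  distinct : g ≠ h ∨ 2 ≤ L.ar g

lemma NotGraphBased.nonempty_contextPair {L : Sig} (hL : NotGraphBased L) :
    Nonempty (ContextPair L) := by
  rcases hL with ⟨f, f', hff', hf, hf'⟩ | ⟨f, hf⟩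
  · exact ⟨⟨f, f', by omega, by omega, .inl hff'⟩⟩
  · exact ⟨⟨f, f, by omega, by omega, .inr hf⟩⟩

namespace ContextPair

variable {L : Sig} (P : ContextPair L)

def D (u : Fm L) : Fm L := .op P.h fun _ => u

def E (u : Fm L) : Fm L := .op P.g fun i => if (i : ℕ) = 0 then u else P.D u

lemma D_injective : Function.Injective P.D :=
  fun _ _ huv => congrFun (Fm.eq_of_op_eq_op huv) ⟨0, P.ar_h_pos⟩

lemma E_injective : Function.Injective P.E := fun u v huv => by
  simpa using congrFun (Fm.eq_of_op_eq_op huv) ⟨0, P.ar_g_pos⟩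

lemma D_ne_E (u v : Fm L) : P.D u ≠ P.E v := by
  obtain ⟨g, h, -, -, hgh | hg⟩ := P <;> intro huv <;> obtain ⟨hhg, hargs⟩ := Fm.op.inj huv
  · exact hgh hhg.symm
  · -- with `g = h`, the first two arguments give `u = v` and `u = D v`
    dsimp only at hhg hargs
    subst hhg
    have h0 := congrFun (eq_of_heq hargs) ⟨0, by omega⟩
    have h1 := congrFun (eq_of_heq hargs) ⟨1, hg⟩
    simp only [Nat.one_ne_zero, if_false, if_true] at h0 h1
    subst h0
    have : u.size < u.size := by
      conv_rhs => rw [h1]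
      exact Fm.size_lt_size_op (fun _ : Fin (L.ar h) => u) ⟨0, by omega⟩
    exact this.false

lemma E_ne_var (u : Fm L) (n : ℕ) : P.E u ≠ .var n := nofun

lemma subst_D (u : Fm L) (σ : ℕ → Fm L) : (P.D u).subst σ = P.D (u.subst σ) := rfl

lemma subst_D_iterate (k : ℕ) (u : Fm L) (σ : ℕ → Fm L) :
    (P.D^[k] u).subst σ = P.D^[k] (u.subst σ) := by
  induction k generalizing u with
  | zero => rfl
  | succ k ih => simp only [Function.iterate_succ_apply, ih, subst_D]

lemma subst_E (u : Fm L) (σ : ℕ → Fm L) : (P.E u).subst σ = P.E (u.subst σ) := by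
  simp only [E, Fm.subst]
  congr 1
  funext i
  split_ifs <;> rfl

lemma subst1_E_D_iterate_var (k : ℕ) (u : Fm L) :
    Fm.subst1 0 u (P.E (P.D^[k] (.var 0))) = P.E (P.D^[k] u) := by
  rw [Fm.subst1, subst_E, subst_D_iterate]
  simp [Fm.subst]

lemma vars_D_subset (u : Fm L) : (P.D u).vars ⊆ u.vars :=
  Set.iUnion_subset fun _ => subset_rfl

lemma vars_D_iterate_subset (k : ℕ) (u : Fm L) : (P.D^[k] u).vars ⊆ u.vars := by
  induction k generalizing u with
  | zero => exact subset_rfl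
  | succ k ih => exact (ih _).trans (P.vars_D_subset u)

lemma vars_E_subset (u : Fm L) : (P.E u).vars ⊆ u.vars :=
  Set.iUnion_subset fun i => by dsimp only; split_ifs; exacts [subset_rfl, P.vars_D_subset u]

lemma lt_size_of_subst1_eq_D_iterate {ρ : Fm L} (hρ : ∀ u, ρ ≠ P.D u) {k : ℕ} :
    ∀ {c V : Fm L}, Fm.subst1 0 ρ c = P.D^[k] V → k < c.size := by
  induction k with
  | zero => exact fun _ => Fm.size_pos _
  | succ k ih =>
    intro c V hc
    rw [Function.iterate_succ_apply'] at hc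
    by_cases hc0 : c = .var 0
    · subst hc0
      exact absurd (by simpa using hc) (hρ _)
    · obtain ⟨c', hc'c, hc'⟩ := Fm.exists_size_lt_of_subst1_eq_op hc hc0 ⟨0, P.ar_h_pos⟩
      have := ih hc'
      omega

lemma subst1_ne_E_D_iterate {ρ : Fm L} (hρ : ∀ u, ρ ≠ P.D u) {c : Fm L} (hc : c ≠ .var 0)
    {k : ℕ} (hk : c.size ≤ k) (W : Fm L) : Fm.subst1 0 ρ c ≠ P.E (P.D^[k] W) := by
  intro h
  obtain ⟨c', hc'c, hc'⟩ := Fm.exists_size_lt_of_subst1_eq_op h hc ⟨0, P.ar_g_pos⟩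
  have := P.lt_size_of_subst1_eq_D_iterate hρ (V := W) (by simpa using hc')
  omega

section Evaluation

variable {P} {R : Fm L → Fm L}

lemma eval_D (hR : ∀ u, R (P.D u) = P.D u) (v : ℕ → Fm L) (u : Fm L) :
    (P.D u).eval (rewriteAlg R) v = P.D (u.eval (rewriteAlg R) v) :=
  hR _

lemma eval_D_iterate (hR : ∀ u, R (P.D u) = P.D u) (v : ℕ → Fm L) (k : ℕ) (u : Fm L) :
    (P.D^[k] u).eval (rewriteAlg R) v = P.D^[k] (u.eval (rewriteAlg R) v) := by
  induction k with
  | zero => rfl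
  | succ k ih => rw [Function.iterate_succ_apply', Function.iterate_succ_apply', eval_D hR, ih]

lemma eval_E (hR : ∀ u, R (P.D u) = P.D u) (v : ℕ → Fm L) (u : Fm L) :
    (P.E u).eval (rewriteAlg R) v = R (P.E (u.eval (rewriteAlg R) v)) := by
  change R (.op P.g fun i => _) = R (.op P.g fun i => _)
  congr 2
  funext i
  dsimp only
  split_ifs
  exacts [rfl, eval_D hR v u]

end Evaluation

end ContextPair

structure TranslationData (L : Sig) extends ContextPair L where
  φ : Fm L
  ψ : Fm L
  ne : φ ≠ ψ
  vars_φ : φ.vars ⊆ {0}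
  vars_ψ : ψ.vars ⊆ {0}
  zero_mem_vars_ψ : 0 ∈ ψ.vars

namespace TranslationData

variable {L : Sig} (S : TranslationData L)

def depth : ℕ := S.φ.size + S.ψ.size

/-- An instance `c[ρ]` (with `ρ` not of the form `D _`) of a pattern `c ≠ x` never has the shape
`E (D^k _)` with `k ≥ |c|`; the heights `2m` here and `m` in `A`, `B` (`m = depth`) therefore keep
`shield u`, `B a` and the instances of `φ`, `ψ` apart. -/
def shield (u : Fm L) : Fm L := S.E (S.D^[2 * S.depth] u)

def A (u : Fm L) : Fm L := S.E (S.D^[S.depth] (Fm.subst1 0 (S.shield u) S.φ))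

def B (u : Fm L) : Fm L := S.E (S.D^[S.depth] (Fm.subst1 0 (S.shield u) S.ψ))

def τ : Set (Fm L × Fm L) := {(S.A (.var 0), S.B (.var 0))}

lemma size_φ_le_depth : S.φ.size ≤ S.depth := Nat.le_add_right _ _

lemma size_ψ_le_depth : S.ψ.size ≤ S.depth := Nat.le_add_left _ _

lemma shield_ne_D (u w : Fm L) : S.shield u ≠ S.D w := fun h => S.D_ne_E w _ h.symm

lemma subst_shield (u : Fm L) (σ : ℕ → Fm L) :
    (S.shield u).subst σ = S.shield (u.subst σ) := by
  rw [shield, S.subst_E, S.subst_D_iterate, shield]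

lemma subst_A (u : Fm L) (σ : ℕ → Fm L) : (S.A u).subst σ = S.A (u.subst σ) := by
  rw [A, S.subst_E, S.subst_D_iterate, Fm.subst_subst1 S.vars_φ, subst_shield, A]

lemma subst_B (u : Fm L) (σ : ℕ → Fm L) : (S.B u).subst σ = S.B (u.subst σ) := by
  rw [B, S.subst_E, S.subst_D_iterate, Fm.subst_subst1 S.vars_ψ, subst_shield, B]

lemma tauApp_τ (d : Fm L) : tauApp S.τ d = {(S.A d, S.B d)} := by
  simp [tauApp, τ, Fm.subst1, subst_A, subst_B, Fm.subst]

lemma vars_shield_subset (u : Fm L) : (S.shield u).vars ⊆ u.vars :=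
  (S.vars_E_subset _).trans (S.vars_D_iterate_subset _ _)

lemma vars_A_subset (u : Fm L) : (S.A u).vars ⊆ u.vars :=
  (S.vars_E_subset _).trans <| (S.vars_D_iterate_subset _ _).trans <|
    (Fm.vars_subst1_subset S.vars_φ _).trans (S.vars_shield_subset u)

lemma vars_B_subset (u : Fm L) : (S.B u).vars ⊆ u.vars :=
  (S.vars_E_subset _).trans <| (S.vars_D_iterate_subset _ _).trans <|
    (Fm.vars_subst1_subset S.vars_ψ _).trans (S.vars_shield_subset u)

lemma isUnivalent_τ : IsUnivalent S.τ := by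
  rintro _ rfl
  exact ⟨S.vars_A_subset _, S.vars_B_subset _⟩

lemma B_injective : Function.Injective S.B := fun _ _ h =>
  (S.D_injective.iterate _) <| S.E_injective <| Fm.subst1_injective S.zero_mem_vars_ψ <|
    (S.D_injective.iterate _) (S.E_injective h)

lemma subst1_shield_ne_shield {c : Fm L} (hc : c ≠ .var 0) (hk : c.size ≤ 2 * S.depth)
    (a e : Fm L) : Fm.subst1 0 (S.shield a) c ≠ S.shield e :=
  S.subst1_ne_E_D_iterate (S.shield_ne_D a) hc hk e

lemma subst1_shield_ne_B {c : Fm L} (hc : c ≠ .var 0) (hk : c.size ≤ S.depth)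
    (e a : Fm L) : Fm.subst1 0 (S.shield e) c ≠ S.B a :=
  S.subst1_ne_E_D_iterate (S.shield_ne_D e) hc hk _

lemma shield_ne_B (e a : Fm L) : S.shield e ≠ S.B a := by
  intro h
  have h' := S.E_injective h
  rw [two_mul, Function.iterate_add_apply] at h'
  have := S.lt_size_of_subst1_eq_D_iterate (S.shield_ne_D a) (S.D_injective.iterate _ h').symm
  have := S.size_ψ_le_depth
  omega

lemma eq_of_subst1_shield_eq {e a : Fm L} :
    ∀ {c c' : Fm L}, c.size ≤ 2 * S.depth → c'.size ≤ 2 * S.depth →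
      Fm.subst1 0 (S.shield e) c = Fm.subst1 0 (S.shield a) c' → c = c' := by
  intro c
  induction c with
  | var n =>
    intro c' _ hc' h
    rcases eq_or_ne n 0 with rfl | hn
    · by_contra hne
      exact S.subst1_shield_ne_shield (Ne.symm hne) hc' a e (by simpa using h.symm)
    · rw [Fm.subst1_var_of_ne hn] at h
      cases c' with
      | var n' =>
        rcases eq_or_ne n' 0 with rfl | hn'
        · simp only [Fm.subst1_var_self] at h
          exact absurd h.symm (S.E_ne_var _ n)
        · rwa [Fm.subst1_var_of_ne hn'] at h
      | op f' cs' => cases h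
  | op f cs ih =>
    intro c' hc hc' h
    cases c' with
    | var n' =>
      rcases eq_or_ne n' 0 with rfl | hn'
      · simp only [Fm.subst1_var_self] at h
        exact absurd h (S.subst1_shield_ne_shield (c := .op f cs) nofun hc e a)
      · rw [Fm.subst1_var_of_ne hn'] at h
        cases h
    | op f' cs' =>
      obtain ⟨rfl, hcs⟩ := Fm.op.inj h
      congr 1
      funext i
      exact ih i ((Fm.size_lt_size_op cs i).le.trans hc) ((Fm.size_lt_size_op cs' i).le.trans hc')
        (congrFun (eq_of_heq hcs) i)

lemma A_ne_B (e a : Fm L) : S.A e ≠ S.B a := fun h =>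
  S.ne <| S.eq_of_subst1_shield_eq (by have := S.size_φ_le_depth; omega)
    (by have := S.size_ψ_le_depth; omega) ((S.D_injective.iterate _) (S.E_injective h))

open Classical in
noncomputable def collapse (T : Set (Fm L)) (t : Fm L) : Fm L :=
  if h : ∃ a ∈ T, t = S.B a then S.A h.choose else t

lemma collapse_of_forall_ne {T : Set (Fm L)} {t : Fm L} (h : ∀ a, t ≠ S.B a) :
    S.collapse T t = t :=
  dif_neg fun ⟨a, _, ha⟩ => h a ha

lemma collapse_B_of_mem {T : Set (Fm L)} {a : Fm L} (ha : a ∈ T) :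
    S.collapse T (S.B a) = S.A a := by
  have h : ∃ b ∈ T, S.B a = S.B b := ⟨a, ha, rfl⟩
  rw [collapse, dif_pos h, ← S.B_injective h.choose_spec.2]

lemma collapse_B_of_notMem {T : Set (Fm L)} {a : Fm L} (ha : a ∉ T) :
    S.collapse T (S.B a) = S.B a :=
  dif_neg fun ⟨_, hb, hab⟩ => ha (S.B_injective hab ▸ hb)

lemma collapse_D (T : Set (Fm L)) (u : Fm L) : S.collapse T (S.D u) = S.D u :=
  S.collapse_of_forall_ne fun _ => S.D_ne_E _ _

noncomputable abbrev model (T : Set (Fm L)) : Alg L := rewriteAlg (S.collapse T)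

section Evaluation

variable (T : Set (Fm L)) (v : ℕ → Fm L)

lemma eval_shield (u : Fm L) :
    (S.shield u).eval (S.model T) v = S.shield (u.eval (S.model T) v) := by
  rw [shield, ContextPair.eval_E (S.collapse_D T), ContextPair.eval_D_iterate (S.collapse_D T)]
  exact S.collapse_of_forall_ne (S.shield_ne_B _)

lemma eval_subst1_shield {c : Fm L} (hc : c.vars ⊆ {0}) (hk : c.size ≤ S.depth) (u : Fm L) :
    (Fm.subst1 0 (S.shield u) c).eval (S.model T) v =
      Fm.subst1 0 (S.shield (u.eval (S.model T) v)) c := by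
  induction c with
  | var n =>
    obtain rfl : n = 0 := hc rfl
    simpa using S.eval_shield T v u
  | op f cs ih =>
    have hcs : (fun i => (Fm.subst1 0 (S.shield u) (cs i)).eval (S.model T) v) =
        fun i => Fm.subst1 0 (S.shield (u.eval (S.model T) v)) (cs i) :=
      funext fun i => ih i ((Fm.vars_subset_vars_op cs i).trans hc)
        ((Fm.size_lt_size_op cs i).le.trans hk)
    change S.collapse T (.op f fun i => (Fm.subst1 0 (S.shield u) (cs i)).eval (S.model T) v) = _
    rw [hcs]
    exact S.collapse_of_forall_ne (S.subst1_shield_ne_B (c := .op f cs) nofun hk _)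

lemma eval_A (u : Fm L) : (S.A u).eval (S.model T) v = S.A (u.eval (S.model T) v) := by
  rw [A, ContextPair.eval_E (S.collapse_D T), ContextPair.eval_D_iterate (S.collapse_D T),
    S.eval_subst1_shield T v S.vars_φ S.size_φ_le_depth]
  exact S.collapse_of_forall_ne (S.A_ne_B _)

lemma eval_B (u : Fm L) :
    (S.B u).eval (S.model T) v = S.collapse T (S.B (u.eval (S.model T) v)) := by
  rw [B, ContextPair.eval_E (S.collapse_D T), ContextPair.eval_D_iterate (S.collapse_D T),
    S.eval_subst1_shield T v S.vars_ψ S.size_ψ_le_depth, B]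

lemma eval_A_eq_eval_B_iff (u : Fm L) :
    (S.A u).eval (S.model T) v = (S.B u).eval (S.model T) v ↔ u.eval (S.model T) v ∈ T := by
  rw [eval_A, eval_B]
  by_cases h : u.eval (S.model T) v ∈ T
  · exact iff_of_true (S.collapse_B_of_mem h).symm h
  · rw [S.collapse_B_of_notMem h]
    exact iff_of_false (S.A_ne_B _ _) h

end Evaluation

section Logic

variable {ℒ : Logic L}

lemma A_logEquiv_B (heq : LogEquiv ℒ S.φ S.ψ) (a : Fm L) : LogEquiv ℒ (S.A a) (S.B a) := by
  have h := heq.subst1_subst (fun n => if n = 0 then S.shield a else .var n)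
    (S.E (S.D^[S.depth] (.var 0))) 0
  rwa [S.subst1_E_D_iterate_var, S.subst1_E_D_iterate_var] at h

lemma logEquiv_collapse (heq : LogEquiv ℒ S.φ S.ψ) (T : Set (Fm L)) (t : Fm L) :
    LogEquiv ℒ t (S.collapse T t) := by
  unfold collapse
  split_ifs with h
  · conv_lhs => rw [h.choose_spec.2]
    exact (S.A_logEquiv_B heq _).symm
  · exact .refl ℒ t

lemma subst_logEquiv_eval (heq : LogEquiv ℒ S.φ S.ψ) (T : Set (Fm L)) (v : ℕ → Fm L)
    (t : Fm L) : LogEquiv ℒ (t.subst v) (t.eval (S.model T) v) := by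
  induction t with
  | var n => exact .refl ℒ _
  | op f as ih => exact (LogEquiv.op ih).trans (S.logEquiv_collapse heq T _)

lemma eval_tauApp_iff (heq : LogEquiv ℒ S.φ S.ψ) (Γ : Set (Fm L)) (v : ℕ → Fm L)
    (d : Fm L) :
    (∀ e ∈ tauApp S.τ d, e.1.eval (S.model {a | ℒ.deriv Γ a}) v =
      e.2.eval (S.model {a | ℒ.deriv Γ a}) v) ↔ ℒ.deriv Γ (d.subst v) := by
  rw [tauApp_τ]
  simp only [Set.mem_singleton_iff, forall_eq]
  rw [eval_A_eq_eval_B_iff, Set.mem_ofPred_eq, (S.subst_logEquiv_eval heq _ v d).deriv_iff]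

lemma isTauSound_model (heq : LogEquiv ℒ S.φ S.ψ) (Γ : Set (Fm L)) :
    IsTauSound ℒ S.τ (S.model {a | ℒ.deriv Γ a}) := by
  rintro Δ δ hΔδ e he _ rfl v hv
  refine (S.eval_tauApp_iff heq Γ v δ).2 (ℒ.deriv_subst_of_deriv hΔδ fun d hd => ?_) e he
  exact (S.eval_tauApp_iff heq Γ v d).1 fun e he => hv e (Set.mem_biUnion hd he)

theorem hasAlgSem (heq : LogEquiv ℒ S.φ S.ψ) : HasAlgSem ℒ := by
  refine hasAlgSem_of_exists_countermodel S.isUnivalent_τ fun Γ γ hγ =>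
    ⟨_, S.isTauSound_model heq Γ, fun h => hγ ?_⟩
  rw [← Fm.subst_id γ]
  refine (S.eval_tauApp_iff heq Γ .var γ).1 fun e he => h e he _ rfl .var fun p hp => ?_
  obtain ⟨d, hd, hp⟩ := Set.mem_iUnion₂.1 hp
  exact (S.eval_tauApp_iff heq Γ .var d).2 (by rw [Fm.subst_id]; exact ℒ.axm Γ d hd) p hp

end Logic

end TranslationData

/-- If `ℒ` is not graph-based and has two distinct logically equivalent formulas `φ`, `ψ`
with `Var(φ) ∪ Var(ψ) = {x}`, then `ℒ` has an algebraic semantics. -/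
theorem non_graph_based_sufficient {L : Sig} (hL : NotGraphBased L) (ℒ : Logic L)
    (φ ψ : Fm L) (hne : φ ≠ ψ) (hvars : φ.vars ∪ ψ.vars = ({0} : Set ℕ))
    (heq : LogEquiv ℒ φ ψ) :
    HasAlgSem ℒ := by
  obtain ⟨P⟩ := hL.nonempty_contextPair
  have hvφ : φ.vars ⊆ {0} := hvars ▸ Set.subset_union_left
  have hvψ : ψ.vars ⊆ {0} := hvars ▸ Set.subset_union_right
  rcases (hvars ▸ rfl : (0 : ℕ) ∈ φ.vars ∪ ψ.vars) with h0 | h0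
  · exact TranslationData.hasAlgSem ⟨P, ψ, φ, hne.symm, hvψ, hvφ, h0⟩ heq.symm
  · exact TranslationData.hasAlgSem ⟨P, φ, ψ, hne, hvφ, hvψ, h0⟩ heq
end
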